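/- arXiv:1401.5194 — 2 statements merged into one kernel-verified Lean document; each statement's English description precedes it below -/
import Mathlib

section
/- For any joint distribution Q_{XY} on finite sets X × Y and any finite set M of syndromes, the probability of correctly guessing X from (Y, M) where M is generated by any channel from X, satisfies p_guess(X|YM) ≤ |M| · p_guess(X|Y). -/
open Finset

/-
Proof idea: for every syndrome `m`, the channel weight `e x m` lies in `[0, 1]`, so
`max_x Q(x,y) e(m|x) ≤ max_x Q(x,y)`; summing over the `|M|` syndromes and then over `y` gives the bound.
-/

theorem le_one_of_sum_eq_one {ι α : Type*} [Fintype ι] [AddCommMonoid α] [PartialOrder α]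
    [One α] [IsOrderedAddMonoid α] {w : ι → α} (hw0 : ∀ i, 0 ≤ w i) (hw1 : ∑ i, w i = 1)
    (i : ι) : w i ≤ 1 :=
  hw1 ▸ single_le_sum (fun j _ => hw0 j) (mem_univ i)

theorem Finset.sup'_mul_le_sup' {ι α : Type*} [MulOneClass α] [Zero α] [LinearOrder α]
    [PosMulMono α] {s : Finset ι} (hs : s.Nonempty) {a w : ι → α} (ha : ∀ i ∈ s, 0 ≤ a i)
    (hw : ∀ i ∈ s, w i ≤ 1) :
    s.sup' hs (fun i => a i * w i) ≤ s.sup' hs a :=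
  sup'_le hs _ fun i hi => (mul_le_of_le_one_right (ha i hi) (hw i hi)).trans (le_sup' a hi)

theorem sum_sup'_mul_stochastic_le {ι M α : Type*} [Fintype M] [Semiring α] [LinearOrder α]
    [IsOrderedRing α] {s : Finset ι} (hs : s.Nonempty) {a : ι → α} (ha : ∀ i ∈ s, 0 ≤ a i)
    {e : ι → M → α} (he0 : ∀ i m, 0 ≤ e i m) (he1 : ∀ i, ∑ m, e i m = 1) :
    ∑ m, s.sup' hs (fun i => a i * e i m) ≤ Fintype.card M * s.sup' hs a := by
  calc ∑ m, s.sup' hs (fun i => a i * e i m)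
      ≤ ∑ _m : M, s.sup' hs a :=
        sum_le_sum fun m _ =>
          s.sup'_mul_le_sup' hs ha fun i _ => le_one_of_sum_eq_one (he0 i) (he1 i) m
    _ = Fintype.card M * s.sup' hs a := by
        rw [sum_const, card_univ, nsmul_eq_mul]

theorem pguess_side_info_bound_general {X Y M : Type*} [Fintype X] [Nonempty X]
    [Fintype Y] [Fintype M]
    (Q : X → Y → ℝ) (hQ0 : ∀ x y, 0 ≤ Q x y)
    (e : X → M → ℝ) (he0 : ∀ x m, 0 ≤ e x m) (he1 : ∀ x, ∑ m, e x m = 1) :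
    (∑ y : Y, ∑ m : M,
        Finset.univ.sup' Finset.univ_nonempty (fun x => Q x y * e x m))
      ≤ (Fintype.card M : ℝ) *
        ∑ y : Y, Finset.univ.sup' Finset.univ_nonempty (fun x => Q x y) := by
  rw [mul_sum]
  exact sum_le_sum fun y _ =>
    sum_sup'_mul_stochastic_le univ_nonempty (fun x _ => hQ0 x y) he0 he1

/-- for any joint distribution `Q` on `X × Y` and any channel
`e : X → P(M)`, the guessing probability of `X` from `(Y, M)` satisfies
`p_guess(X|YM) ≤ |M| · p_guess(X|Y)`. -/
theorem pguess_side_info_bound {X Y M : Type*} [Fintype X] [Nonempty X]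
    [Fintype Y] [Fintype M]
    (Q : X → Y → ℝ) (hQ0 : ∀ x y, 0 ≤ Q x y) (hQ1 : ∑ x, ∑ y, Q x y = 1)
    (e : X → M → ℝ) (he0 : ∀ x m, 0 ≤ e x m) (he1 : ∀ x, ∑ m, e x m = 1) :
    (∑ y : Y, ∑ m : M,
        Finset.univ.sup' Finset.univ_nonempty (fun x => Q x y * e x m))
      ≤ (Fintype.card M : ℝ) *
        ∑ y : Y, Finset.univ.sup' Finset.univ_nonempty (fun x => Q x y) :=
  pguess_side_info_bound_general Q hQ0 e he0 he1
end

section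
/- One-shot converse with uniform reference: any ε-correct one-way IR code for P_{XY} on finite alphabets X, Y satisfies log|M| ≥ log|X| - D_s^{ε+δ}(P_{XY} ‖ U_X × P_Y) + log δ for any δ ∈ (0, 1-ε), where U_X is the uniform distribution on X and P_Y is the Y-marginal of P_{XY}. -/
open scoped BigOperators
noncomputable section

/-- ε-information spectrum for joint distributions on `X × Y` (curried form). -/
def DsJ {X Y : Type*} [Fintype X] [Fintype Y] (ε : ℝ) (P Q : X → Y → ℝ) : ℝ :=
  sSup {R : ℝ | (∑ x, ∑ y, if Real.log (P x y / Q x y) ≤ R then P x y else 0) ≤ ε}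

/-!
Let `f x y` be the probability that the code decodes `x` correctly from `y`. As a test between
`P_{XY}` and `U_X × P_Y` it accepts `P_{XY}` with probability at least `1 - ε`, while for each `y`
we have `∑ x, f x y ≤ |M|`, so it accepts `U_X × P_Y` with probability at most `|M| / |X|`.
Splitting the event `log (P / Q) ≤ log c` along the test bounds its `P`-probability by
`ε + c |M| / |X|`; with `c = δ |X| / |M|` this is `ε + δ`, hence `log c ≤ D_s^{ε+δ}`.
-/

open Finset

section InformationSpectrum

variable {X Y : Type*} [Fintype X] [Fintype Y]

def logRatioCDF (P Q : X → Y → ℝ) (R : ℝ) : ℝ :=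
  ∑ x, ∑ y, if Real.log (P x y / Q x y) ≤ R then P x y else 0

lemma logRatioCDF_eq_sum_of_forall_le {P Q : X → Y → ℝ} {R : ℝ}
    (hR : ∀ x y, Real.log (P x y / Q x y) ≤ R) :
    logRatioCDF P Q R = ∑ x, ∑ y, P x y :=
  sum_congr rfl fun x _ => sum_congr rfl fun y _ => if_pos (hR x y)

lemma bddAbove_setOf_logRatioCDF_le {ε : ℝ} {P Q : X → Y → ℝ}
    (hε : ε < ∑ x, ∑ y, P x y) : BddAbove {R : ℝ | logRatioCDF P Q R ≤ ε} := by
  obtain ⟨B, hB⟩ := Finite.exists_le fun z : X × Y => Real.log (P z.1 z.2 / Q z.1 z.2)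
  refine ⟨B, fun R hR => le_of_not_gt fun hBR => ?_⟩
  have hall : ∀ x y, Real.log (P x y / Q x y) ≤ R := fun x y => (hB (x, y)).trans hBR.le
  exact (hR.trans_lt hε).ne (logRatioCDF_eq_sum_of_forall_le hall)

lemma le_DsJ_of_logRatioCDF_le {ε R : ℝ} {P Q : X → Y → ℝ}
    (hε : ε < ∑ x, ∑ y, P x y) (hR : logRatioCDF P Q R ≤ ε) : R ≤ DsJ ε P Q :=
  le_csSup (bddAbove_setOf_logRatioCDF_le hε) hR

/-- On the event `p ≤ c q`, the mass `p` is split as `p (1 - f) + p f ≤ p (1 - f) + c q f`. -/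
lemma ite_log_div_le_log_le {p q c f : ℝ} (hp : 0 ≤ p) (hq : 0 ≤ q) (hpq : 0 < p → 0 < q)
    (hc : 0 < c) (hf0 : 0 ≤ f) (hf1 : f ≤ 1) :
    (if Real.log (p / q) ≤ Real.log c then p else 0) ≤ p * (1 - f) + c * q * f := by
  split_ifs with hlog
  · have hpcq : p ≤ c * q := by
      rcases hp.eq_or_lt with rfl | hp
      · positivity
      · have hq := hpq hp
        exact (div_le_iff₀ hq).1 ((Real.log_le_log_iff (div_pos hp hq) hc).1 hlog)
    nlinarith [mul_le_mul_of_nonneg_right hpcq hf0]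
  · have := mul_nonneg hp (sub_nonneg.2 hf1)
    positivity

lemma logRatioCDF_log_le_of_test {P Q f : X → Y → ℝ} {c : ℝ} (hP : ∀ x y, 0 ≤ P x y)
    (hQ : ∀ x y, 0 ≤ Q x y) (hPQ : ∀ x y, 0 < P x y → 0 < Q x y) (hc : 0 < c)
    (hf0 : ∀ x y, 0 ≤ f x y) (hf1 : ∀ x y, f x y ≤ 1) :
    logRatioCDF P Q (Real.log c)
      ≤ ∑ x, ∑ y, P x y * (1 - f x y) + c * ∑ x, ∑ y, Q x y * f x y := by
  calc logRatioCDF P Q (Real.log c)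
      ≤ ∑ x, ∑ y, (P x y * (1 - f x y) + c * Q x y * f x y) :=
        sum_le_sum fun x _ => sum_le_sum fun y _ =>
          ite_log_div_le_log_le (hP x y) (hQ x y) (hPQ x y) hc (hf0 x y) (hf1 x y)
    _ = ∑ x, ∑ y, P x y * (1 - f x y) + c * ∑ x, ∑ y, Q x y * f x y := by
        simp only [sum_add_distrib, mul_sum, mul_assoc]

end InformationSpectrum

lemma le_one_of_sum_eq_one_s7 {ι : Type*} [Fintype ι] {w : ι → ℝ} (h0 : ∀ i, 0 ≤ w i)
    (h1 : ∑ i, w i = 1) (i : ι) : w i ≤ 1 :=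
  h1 ▸ single_le_sum (fun j _ => h0 j) (mem_univ i)

section OneWayCode

variable {X Y M : Type*} [Fintype M]
  {e : X → M → ℝ} {d : Y → M → X → ℝ}

variable (e d) in
def successProb (x : X) (y : Y) : ℝ :=
  ∑ m, e x m * d y m x

lemma successProb_nonneg (he0 : ∀ x m, 0 ≤ e x m) (hd0 : ∀ y m x, 0 ≤ d y m x)
    (x : X) (y : Y) :
    0 ≤ successProb e d x y :=
  sum_nonneg fun m _ => mul_nonneg (he0 x m) (hd0 y m x)

lemma successProb_le_one [Fintype X] (he0 : ∀ x m, 0 ≤ e x m) (he1 : ∀ x, ∑ m, e x m = 1)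
    (hd0 : ∀ y m x, 0 ≤ d y m x) (hd1 : ∀ y m, ∑ x, d y m x = 1) (x : X) (y : Y) :
    successProb e d x y ≤ 1 :=
  calc successProb e d x y ≤ ∑ m, e x m :=
        sum_le_sum fun m _ =>
          mul_le_of_le_one_right (he0 x m) (le_one_of_sum_eq_one_s7 (hd0 y m) (hd1 y m) x)
    _ = 1 := he1 x

/-- Each syndrome `m` is decoded to a single distribution over `X`, so the success
probabilities for a fixed `y` add up to at most `|M|`. -/
lemma sum_successProb_le_card [Fintype X] (he0 : ∀ x m, 0 ≤ e x m)
    (he1 : ∀ x, ∑ m, e x m = 1) (hd0 : ∀ y m x, 0 ≤ d y m x)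
    (hd1 : ∀ y m, ∑ x, d y m x = 1) (y : Y) :
    ∑ x, successProb e d x y ≤ Fintype.card M :=
  calc ∑ x, successProb e d x y = ∑ m, ∑ x, e x m * d y m x := sum_comm
    _ ≤ ∑ m, ∑ x, d y m x :=
        sum_le_sum fun m _ => sum_le_sum fun x _ =>
          mul_le_of_le_one_left (hd0 y m x) (le_one_of_sum_eq_one_s7 (he0 x) (he1 x) m)
    _ = Fintype.card M := by simp [hd1]

lemma sum_sum_mul_successProb_le [Fintype X] [Fintype Y] {g : Y → ℝ} (hg : ∀ y, 0 ≤ g y)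
    (he0 : ∀ x m, 0 ≤ e x m) (he1 : ∀ x, ∑ m, e x m = 1)
    (hd0 : ∀ y m x, 0 ≤ d y m x) (hd1 : ∀ y m, ∑ x, d y m x = 1) :
    ∑ x, ∑ y, g y * successProb e d x y ≤ Fintype.card M * ∑ y, g y :=
  calc ∑ x, ∑ y, g y * successProb e d x y = ∑ y, g y * ∑ x, successProb e d x y := by
        rw [sum_comm]; simp only [mul_sum]
    _ ≤ ∑ y, g y * Fintype.card M :=
        sum_le_sum fun y _ =>
          mul_le_mul_of_nonneg_left (sum_successProb_le_card he0 he1 hd0 hd1 y) (hg y)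
    _ = Fintype.card M * ∑ y, g y := by rw [mul_sum]; simp only [mul_comm]

end OneWayCode

theorem one_shot_converse_IR_uniform_general {X Y M : Type*} [Fintype X] [Nonempty X]
    [Fintype Y] [Fintype M]
    (ε δ : ℝ) (hδ0 : 0 < δ) (hδ1 : δ < 1 - ε)
    (P : X → Y → ℝ) (hP0 : ∀ x y, 0 ≤ P x y) (hP1 : ∑ x, ∑ y, P x y = 1)
    (e : X → M → ℝ) (he0 : ∀ x m, 0 ≤ e x m) (he1 : ∀ x, ∑ m, e x m = 1)
    (d : Y → M → X → ℝ) (hd0 : ∀ y m x, 0 ≤ d y m x) (hd1 : ∀ y m, ∑ x, d y m x = 1)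
    (hcorrect : 1 - ε ≤ ∑ x, ∑ y, ∑ m, P x y * e x m * d y m x) :
    Real.log (Fintype.card X)
      - DsJ (ε + δ) P (fun _ y => (Fintype.card X : ℝ)⁻¹ * ∑ x', P x' y)
      + Real.log δ ≤ Real.log (Fintype.card M) := by
  set Q : X → Y → ℝ := fun _ y => (Fintype.card X : ℝ)⁻¹ * ∑ x', P x' y
  obtain ⟨m, -⟩ := nonempty_of_sum_ne_zero ((he1 (Classical.arbitrary X)).trans_ne one_ne_zero)
  have hX : (0 : ℝ) < Fintype.card X := by exact_mod_cast Fintype.card_pos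
  have hM : (0 : ℝ) < Fintype.card M := by exact_mod_cast Fintype.card_pos_iff.2 ⟨m⟩
  have hQ0 : ∀ x y, 0 ≤ Q x y := fun x y => by
    have : 0 ≤ ∑ x', P x' y := sum_nonneg fun x' _ => hP0 x' y
    positivity
  have hPQ : ∀ x y, 0 < P x y → 0 < Q x y := fun x y hp =>
    mul_pos (inv_pos.2 hX) (hp.trans_le (single_le_sum (fun x' _ => hP0 x' y) (mem_univ x)))
  have hmiss : ∑ x, ∑ y, P x y * (1 - successProb e d x y) ≤ ε := by
    simp only [mul_sub, mul_one, sum_sub_distrib, hP1, successProb, mul_sum, ← mul_assoc]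
    linarith
  have hfalse : ∑ x, ∑ y, Q x y * successProb e d x y ≤ Fintype.card M / Fintype.card X := by
    refine (sum_sum_mul_successProb_le (hQ0 (Classical.arbitrary X)) he0 he1 hd0 hd1).trans_eq ?_
    rw [← mul_sum, sum_comm, hP1]; ring
  set c := δ * Fintype.card X / Fintype.card M
  have htail : logRatioCDF P Q (Real.log c) ≤ ε + δ := calc
    logRatioCDF P Q (Real.log c)
        ≤ ∑ x, ∑ y, P x y * (1 - successProb e d x y)
          + c * ∑ x, ∑ y, Q x y * successProb e d x y :=
      logRatioCDF_log_le_of_test hP0 hQ0 hPQ (by positivity) (successProb_nonneg he0 hd0)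
        (successProb_le_one he0 he1 hd0 hd1)
    _ ≤ ε + c * (Fintype.card M / Fintype.card X) := by gcongr
    _ = ε + δ := by simp only [c]; field_simp
  have hDs := le_DsJ_of_logRatioCDF_le (by linarith) htail
  rw [Real.log_div (by positivity) hM.ne', Real.log_mul hδ0.ne' hX.ne'] at hDs
  linarith

/-- one-shot converse with uniform reference distribution: any
ε-correct one-way IR code for `P_{XY}` satisfies
`log|M| ≥ log|X| - D_s^{ε+δ}(P_{XY} ‖ U_X × P_Y) + log δ`. -/
theorem one_shot_converse_IR_uniform {X Y M : Type*} [Fintype X] [Nonempty X]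
    [Fintype Y] [Fintype M]
    (ε δ : ℝ) (hε0 : 0 < ε) (hε1 : ε < 1) (hδ0 : 0 < δ) (hδ1 : δ < 1 - ε)
    (P : X → Y → ℝ) (hP0 : ∀ x y, 0 ≤ P x y) (hP1 : ∑ x, ∑ y, P x y = 1)
    (e : X → M → ℝ) (he0 : ∀ x m, 0 ≤ e x m) (he1 : ∀ x, ∑ m, e x m = 1)
    (d : Y → M → X → ℝ) (hd0 : ∀ y m x, 0 ≤ d y m x) (hd1 : ∀ y m, ∑ x, d y m x = 1)
    (hcorrect : 1 - ε ≤ ∑ x, ∑ y, ∑ m, P x y * e x m * d y m x) :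
    Real.log (Fintype.card X)
      - DsJ (ε + δ) P (fun _ y => (Fintype.card X : ℝ)⁻¹ * ∑ x', P x' y)
      + Real.log δ ≤ Real.log (Fintype.card M) :=
  one_shot_converse_IR_uniform_general ε δ hδ0 hδ1 P hP0 hP1 e he0 he1 d hd0 hd1 hcorrect
end
end
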